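/- Let m be an odd positive integer and h = u² + u^{2m}, u > 0. With J_{i,j} = ∫_{L⁺} x^i y^j dx as above, for all i ≥ 2 and j ≥ 0: (i + j + 1) J_{i,j} = (i-1) h J_{i-2,j} + ((-1)^{i+mj+2m-1} - 1) u^{i+mj+2m-1}. -/

import Mathlib

/-- The angle of the right intersection point `(u, u^m)` of the circle
`x^2 + y^2 = u^2 + u^(2m)` with the switching curve `y = x^m`. -/
noncomputable def thetaB (m : ℕ) (u : ℝ) : ℝ :=
  Real.arcsin (u ^ m / Real.sqrt (u ^ 2 + u ^ (2 * m)))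

/-- `J_{i,j} = ∫_{L⁺} x^i y^j dx` along the arc of the circle `x^2 + y^2 = u^2 + u^(2m)`
lying in `y ≥ x^m` (for odd `m`), oriented from `(-u, -u^m)` (angle `π + θ_B`)
to `(u, u^m)` (angle `θ_B`), i.e. clockwise through the top.  With
`x = √h cos θ`, `y = √h sin θ`, `dx = -√h sin θ dθ`, traversal from `π + θ_B`
down to `θ_B` gives the integral below. -/
noncomputable def Jodd (m : ℕ) (u : ℝ) (i j : ℕ) : ℝ :=
  ∫ t in thetaB m u..(Real.pi + thetaB m u),
    Real.sqrt (u ^ 2 + u ^ (2 * m)) ^ (i + j + 1) * Real.cos t ^ i * Real.sin t ^ (j + 1)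

/-- `I_{i,j} = ∫_{L⁻} x^i y^j dx` along the complementary lower arc, oriented from
`(u, u^m)` (angle `θ_B`) down through the bottom to `(-u, -u^m)` (angle `θ_B - π`). -/
noncomputable def Iodd (m : ℕ) (u : ℝ) (i j : ℕ) : ℝ :=
  ∫ t in (thetaB m u - Real.pi)..thetaB m u,
    Real.sqrt (u ^ 2 + u ^ (2 * m)) ^ (i + j + 1) * Real.cos t ^ i * Real.sin t ^ (j + 1)

/-! `d/dt (cos^(i-1) t · sin^(j+2) t)` equals
`(i+j+1) cos^i t sin^(j+1) t - (i-1) cos^(i-2) t sin^(j+1) t` once `sin² = 1 - cos²` is used, so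
integrating over the half-turn `[θ_B, π + θ_B]` gives the recurrence up to a boundary term. Since
`√h (cos θ_B, sin θ_B) = (u, u^m)` and both coordinates change sign after a half-turn, the
boundary term is `((-1)^(i+j+1) - 1) u^(i-1) (u^m)^(j+2)`, and for odd `m` the sign matches
`(-1)^(i+mj+2m-1)`. -/

open Real intervalIntegral

theorem sqrt_mul_sin_arcsin_div_sqrt (x y : ℝ) :
    √(x ^ 2 + y ^ 2) * sin (arcsin (y / √(x ^ 2 + y ^ 2))) = y := by
  rcases (sqrt_nonneg (x ^ 2 + y ^ 2)).eq_or_lt with h0 | hpos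
  · have hy : y = 0 := by
      have := (sqrt_eq_zero (by positivity)).mp h0.symm
      nlinarith [sq_nonneg x, sq_nonneg y]
    simp [hy]
  · have hle : |y / √(x ^ 2 + y ^ 2)| ≤ 1 := by
      rw [abs_div, abs_of_pos hpos, div_le_one hpos]
      exact abs_le_sqrt (le_add_of_nonneg_left (sq_nonneg x))
    rw [sin_arcsin (abs_le.mp hle).1 (abs_le.mp hle).2]
    field_simp

theorem sqrt_mul_cos_arcsin_div_sqrt {x : ℝ} (hx : 0 ≤ x) (y : ℝ) :
    √(x ^ 2 + y ^ 2) * cos (arcsin (y / √(x ^ 2 + y ^ 2))) = x := by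
  have hx2 : (x ^ 2 + y ^ 2) * (1 - (y / √(x ^ 2 + y ^ 2)) ^ 2) = x ^ 2 := by
    rcases (add_nonneg (sq_nonneg x) (sq_nonneg y)).eq_or_lt with h0 | hpos
    · rw [← h0]; nlinarith [sq_nonneg x, sq_nonneg y]
    · rw [div_pow, sq_sqrt hpos.le]
      field_simp
      ring
  rw [cos_arcsin, ← sqrt_mul (by positivity), hx2, sqrt_sq hx]

theorem hasDerivAt_cos_pow_succ_mul_sin_pow_succ (p q : ℕ) (t : ℝ) :
    HasDerivAt (fun t => cos t ^ (p + 1) * sin t ^ (q + 1))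
      (((p : ℝ) + q + 2) * (cos t ^ (p + 2) * sin t ^ q) - (p + 1) * (cos t ^ p * sin t ^ q))
      t := by
  have hcos : HasDerivAt (fun t => cos t ^ (p + 1)) ((p + 1) * cos t ^ p * -sin t) t := by
    simpa using (hasDerivAt_cos t).fun_pow (p + 1)
  have hsin : HasDerivAt (fun t => sin t ^ (q + 1)) ((q + 1) * sin t ^ q * cos t) t := by
    simpa using (hasDerivAt_sin t).fun_pow (q + 1)
  refine (hcos.mul hsin).congr_deriv ?_
  linear_combination (-((p : ℝ) + 1)) * cos t ^ p * sin t ^ q * sin_sq t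

theorem integral_cos_pow_add_two_mul_sin_pow (p q : ℕ) (a b : ℝ) :
    ((p : ℝ) + q + 2) * ∫ t in a..b, cos t ^ (p + 2) * sin t ^ q =
      (p + 1) * (∫ t in a..b, cos t ^ p * sin t ^ q) +
        (cos b ^ (p + 1) * sin b ^ (q + 1) - cos a ^ (p + 1) * sin a ^ (q + 1)) := by
  rw [← integral_eq_sub_of_hasDerivAt (fun t _ => hasDerivAt_cos_pow_succ_mul_sin_pow_succ p q t)
      (by apply Continuous.intervalIntegrable; fun_prop),
    integral_sub (by apply Continuous.intervalIntegrable; fun_prop)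
      (by apply Continuous.intervalIntegrable; fun_prop),
    integral_const_mul, integral_const_mul]
  ring

theorem integral_cos_pow_add_two_mul_sin_pow_half_period (p q : ℕ) (θ : ℝ) :
    ((p : ℝ) + q + 2) * ∫ t in θ..π + θ, cos t ^ (p + 2) * sin t ^ q =
      (p + 1) * (∫ t in θ..π + θ, cos t ^ p * sin t ^ q) +
        ((-1) ^ (p + q) - 1) * (cos θ ^ (p + 1) * sin θ ^ (q + 1)) := by
  rw [integral_cos_pow_add_two_mul_sin_pow, add_comm π, cos_add_pi, sin_add_pi, neg_pow,
    neg_pow (sin θ)]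
  ring

theorem sqrt_mul_sin_thetaB (m : ℕ) (u : ℝ) :
    √(u ^ 2 + u ^ (2 * m)) * sin (thetaB m u) = u ^ m := by
  rw [thetaB, pow_mul']
  exact sqrt_mul_sin_arcsin_div_sqrt u (u ^ m)

theorem sqrt_mul_cos_thetaB (m : ℕ) {u : ℝ} (hu : 0 ≤ u) :
    √(u ^ 2 + u ^ (2 * m)) * cos (thetaB m u) = u := by
  rw [thetaB, pow_mul']
  exact sqrt_mul_cos_arcsin_div_sqrt hu (u ^ m)

theorem Jodd_eq_mul_integral (m : ℕ) (u : ℝ) (i j : ℕ) :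
    Jodd m u i j = √(u ^ 2 + u ^ (2 * m)) ^ (i + j + 1) *
      ∫ t in thetaB m u..π + thetaB m u, cos t ^ i * sin t ^ (j + 1) := by
  simp only [Jodd, ← integral_const_mul, mul_assoc]

/-- the recurrence
`(i+j+1) J_{i,j} = (i-1) h J_{i-2,j} + ((-1)^(i+mj+2m-1) - 1) u^(i+mj+2m-1)` for `i ≥ 2`. -/
theorem J_recurrence_i (m : ℕ) (hm : Odd m) (u : ℝ) (hu : 0 < u) (i j : ℕ) (hi : 2 ≤ i) :
    ((i : ℝ) + j + 1) * Jodd m u i j =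
      ((i : ℝ) - 1) * (u ^ 2 + u ^ (2 * m)) * Jodd m u (i - 2) j +
        ((-1 : ℝ) ^ (i + m * j + 2 * m - 1) - 1) * u ^ (i + m * j + 2 * m - 1) := by
  obtain ⟨p, rfl⟩ : ∃ p, i = p + 2 := ⟨i - 2, by omega⟩
  have hexp : p + 2 + m * j + 2 * m - 1 = (p + 1) + m * (j + 2) := by
    rw [Nat.mul_add]; omega
  have hsign : (-1 : ℝ) ^ ((p + 1) + m * (j + 2)) = (-1) ^ (p + 1) * (-1) ^ (j + 2) := by
    rw [pow_add, pow_mul, hm.neg_one_pow]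
  rw [Jodd_eq_mul_integral, Jodd_eq_mul_integral, Nat.add_sub_cancel, hexp, hsign]
  set s := √(u ^ 2 + u ^ (2 * m))
  set θ := thetaB m u
  have hs2 : s ^ 2 = u ^ 2 + u ^ (2 * m) := sq_sqrt (by positivity)
  have hboundary : s ^ (p + 2 + j + 1) * (cos θ ^ (p + 1) * sin θ ^ (j + 1 + 1)) =
      u ^ ((p + 1) + m * (j + 2)) := by
    calc s ^ (p + 2 + j + 1) * (cos θ ^ (p + 1) * sin θ ^ (j + 1 + 1))
        _ = (s * cos θ) ^ (p + 1) * (s * sin θ) ^ (j + 2) := by ring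
        _ = u ^ ((p + 1) + m * (j + 2)) := by
          rw [sqrt_mul_cos_thetaB m hu.le, sqrt_mul_sin_thetaB, ← pow_mul, ← pow_add]
  have hred := integral_cos_pow_add_two_mul_sin_pow_half_period p (j + 1) θ
  push_cast at hred ⊢
  rw [← hboundary, ← hs2]
  linear_combination s ^ (p + j + 3) * hred
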